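/- arXiv:2302.02115 — 4 statements merged into one kernel-verified Lean document; each statement's English description precedes it below -/
import Mathlib

section
/- Let (a_k)_{k≥1} and (ω_k)_{k≥1} be nonnegative real sequences, let q ∈ (0,1] and α > 0 with α > 1 in case q = 1, and suppose there exists an index k₀ such that a_{k+1} ≤ (1 − α/k^q) a_k + ω_k for all k ≥ k₀. If ∑_{k≥k₀} k^q ω_k < +∞, then ∑_{k≥1} a_k < +∞. -/
open Filter Asymptotics Topology

/-- Lemma 3: a summability lemma for nonnegative sequences satisfying a
quasi-contractive recursion with coefficient `1 - α / k ^ q`. -/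
theorem stmt4
    (a ω : ℕ → ℝ) (ha : ∀ k, 0 ≤ a k) (hω : ∀ k, 0 ≤ ω k)
    (q α : ℝ) (hq0 : 0 < q) (hq1 : q ≤ 1) (hα : 0 < α) (hα1 : q = 1 → 1 < α)
    (k₀ : ℕ) (hk₀ : 1 ≤ k₀)
    (hrec : ∀ k : ℕ, k₀ ≤ k → a (k + 1) ≤ (1 - α / (k : ℝ) ^ q) * a k + ω k)
    (hsum : Summable fun k : ℕ => (k : ℝ) ^ q * ω k) :
    Summable a := by
  -- choose β > 0 and K such that for all k ≥ K, q / k^(1-q) ≤ α - β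
  obtain ⟨β, hβ, K, hKk₀, hK1, hcond⟩ :
      ∃ β > 0, ∃ K : ℕ, k₀ ≤ K ∧ 1 ≤ K ∧
        ∀ k : ℕ, K ≤ k → q / (k : ℝ) ^ (1 - q) ≤ α - β := by
    rcases eq_or_lt_of_le hq1 with hq | hq
    · refine ⟨α - 1, by linarith [hα1 hq], k₀, le_rfl, hk₀, fun k hk => ?_⟩
      have hk1 : (1 : ℝ) ≤ (k : ℝ) := by exact_mod_cast hk₀.trans hk
      rw [hq]
      simp only [sub_self, Real.rpow_zero, div_one]
      linarith
    · -- q < 1 : use that k^(1-q) → ∞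
      have htend : Tendsto (fun k : ℕ => (k : ℝ) ^ (1 - q)) atTop atTop :=
        (tendsto_rpow_atTop (by linarith : (0:ℝ) < 1 - q)).comp tendsto_natCast_atTop_atTop
      have hev : ∀ᶠ k : ℕ in atTop, 2 * q / α ≤ (k : ℝ) ^ (1 - q) :=
        htend.eventually_ge_atTop _
      obtain ⟨K₁, hK₁⟩ := hev.exists_forall_of_atTop
      refine ⟨α / 2, by linarith, max (max k₀ 1) K₁, le_trans (le_max_left _ _) (le_max_left _ _),
        le_trans (le_max_right _ _) (le_max_left _ _), fun k hk => ?_⟩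
      have hk1 : 1 ≤ k := le_trans (le_trans (le_max_right _ _) (le_max_left _ _)) hk
      have hkpos : (0 : ℝ) < (k : ℝ) := by exact_mod_cast hk1
      have hpow : (0 : ℝ) < (k : ℝ) ^ (1 - q) := Real.rpow_pos_of_pos hkpos _
      have h2 : 2 * q / α ≤ (k : ℝ) ^ (1 - q) := hK₁ k (le_trans (le_max_right _ _) hk)
      rw [div_le_iff₀ hpow]
      have : 2 * q / α * α ≤ (k : ℝ) ^ (1 - q) * α :=
        mul_le_mul_of_nonneg_right h2 hα.le
      rw [div_mul_cancel₀ _ (ne_of_gt hα)] at this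
      nlinarith
  -- the weighted sequence
  set b : ℕ → ℝ := fun k => (k : ℝ) ^ q * a k with hb
  have hbnn : ∀ k, 0 ≤ b k := fun k =>
    mul_nonneg (Real.rpow_nonneg (Nat.cast_nonneg k) _) (ha k)
  -- key scalar inequality
  have hscalar : ∀ k : ℕ, K ≤ k → ((k : ℝ) + 1) ^ q * (1 - α / (k : ℝ) ^ q)
      ≤ (k : ℝ) ^ q - β := by
    intro k hk
    have hk1 : (1 : ℝ) ≤ (k : ℝ) := by exact_mod_cast hK1.trans hk
    have hkpos : (0 : ℝ) < (k : ℝ) := by linarith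
    have hkq : (0 : ℝ) < (k : ℝ) ^ q := Real.rpow_pos_of_pos hkpos q
    -- (k+1)^q ≤ k^q + q * k^(q-1)
    have hfact : ((k : ℝ) + 1) ^ q = (k : ℝ) ^ q * (1 + 1 / (k : ℝ)) ^ q := by
      rw [← Real.mul_rpow (le_of_lt hkpos) (by positivity)]
      congr 1
      field_simp
    have hbern : (1 + 1 / (k : ℝ)) ^ q ≤ 1 + q * (1 / (k : ℝ)) :=
      rpow_one_add_le_one_add_mul_self (le_trans (by norm_num) (by positivity : (0:ℝ) ≤ 1 / (k:ℝ))) hq0.le hq1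
    have h1 : ((k : ℝ) + 1) ^ q ≤ (k : ℝ) ^ q + q * (k : ℝ) ^ q / (k : ℝ) := by
      rw [hfact]
      calc (k : ℝ) ^ q * (1 + 1 / (k : ℝ)) ^ q
          ≤ (k : ℝ) ^ q * (1 + q * (1 / (k : ℝ))) :=
            mul_le_mul_of_nonneg_left hbern hkq.le
        _ = (k : ℝ) ^ q + q * (k : ℝ) ^ q / (k : ℝ) := by ring
    -- q * k^q / k = q / k^(1-q)
    have h2 : q * (k : ℝ) ^ q / (k : ℝ) = q / (k : ℝ) ^ (1 - q) := by
      rw [Real.rpow_sub hkpos, Real.rpow_one]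
      field_simp
    have h3 : q * (k : ℝ) ^ q / (k : ℝ) ≤ α - β := by
      rw [h2]; exact hcond k hk
    -- (k+1)^q / k^q ≥ 1
    have h4 : (k : ℝ) ^ q ≤ ((k : ℝ) + 1) ^ q :=
      Real.rpow_le_rpow hkpos.le (by linarith) hq0.le
    have h5 : α ≤ α * (((k : ℝ) + 1) ^ q / (k : ℝ) ^ q) := by
      have : (1 : ℝ) ≤ ((k : ℝ) + 1) ^ q / (k : ℝ) ^ q :=
        (one_le_div hkq).mpr h4
      nlinarith
    have hexp : ((k : ℝ) + 1) ^ q * (1 - α / (k : ℝ) ^ q)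
        = ((k : ℝ) + 1) ^ q - α * (((k : ℝ) + 1) ^ q / (k : ℝ) ^ q) := by
      field_simp
    rw [hexp]
    linarith
  -- key recursive inequality for b
  have hkey : ∀ k : ℕ, K ≤ k →
      b (k + 1) ≤ b k - β * a k + ((k : ℝ) + 1) ^ q * ω k := by
    intro k hk
    have hrk := hrec k (hKk₀.trans hk)
    have hp : (0 : ℝ) ≤ ((k : ℝ) + 1) ^ q := Real.rpow_nonneg (by positivity) _
    have h1 : b (k + 1) ≤ ((k : ℝ) + 1) ^ q * ((1 - α / (k : ℝ) ^ q) * a k + ω k) := by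
      have : b (k + 1) = ((k : ℝ) + 1) ^ q * a (k + 1) := by
        simp [hb]
      rw [this]
      exact mul_le_mul_of_nonneg_left hrk hp
    have h2 : ((k : ℝ) + 1) ^ q * (1 - α / (k : ℝ) ^ q) * a k
        ≤ ((k : ℝ) ^ q - β) * a k :=
      mul_le_mul_of_nonneg_right (hscalar k hk) (ha k)
    calc b (k + 1) ≤ ((k : ℝ) + 1) ^ q * ((1 - α / (k : ℝ) ^ q) * a k + ω k) := h1
      _ = ((k : ℝ) + 1) ^ q * (1 - α / (k : ℝ) ^ q) * a k
          + ((k : ℝ) + 1) ^ q * ω k := by ring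
      _ ≤ ((k : ℝ) ^ q - β) * a k + ((k : ℝ) + 1) ^ q * ω k := by linarith
      _ = b k - β * a k + ((k : ℝ) + 1) ^ q * ω k := by simp [hb]; ring
  -- the perturbation sequence g is summable
  set g : ℕ → ℝ := fun k => ((k : ℝ) + 1) ^ q * ω k with hg
  have hgnn : ∀ k, 0 ≤ g k := fun k =>
    mul_nonneg (Real.rpow_nonneg (by positivity) _) (hω k)
  have hgsum : Summable g := by
    rw [← summable_nat_add_iff 1]
    simp only [hg]
    apply Summable.of_nonneg_of_le
      (f := fun k => 2 ^ q * (((k + 1 : ℕ) : ℝ) ^ q * ω (k + 1)))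
    · intro k
      push_cast
      exact mul_nonneg (Real.rpow_nonneg (by positivity) _) (hω _)
    · intro k
      have hc : ((k : ℝ) + 1 + 1) ^ q ≤ 2 ^ q * ((k : ℝ) + 1) ^ q := by
        rw [← Real.mul_rpow (by norm_num) (by positivity)]
        apply Real.rpow_le_rpow (by positivity) (by linarith) hq0.le
      push_cast
      exact mul_le_mul_of_nonneg_right hc (hω (k + 1)) |>.trans_eq (by ring)
    · exact ((summable_nat_add_iff 1).mpr hsum).mul_left _
  have hgsum' : Summable fun i => g (i + K) := (summable_nat_add_iff K).mpr hgsum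
  set T := ∑' i, g (i + K) with hT
  -- telescoping bound on partial sums
  have htel : ∀ n : ℕ, β * ∑ i ∈ Finset.range n, a (i + K) + b (K + n)
      ≤ b K + ∑ i ∈ Finset.range n, g (i + K) := by
    intro n
    induction n with
    | zero => simp
    | succ n ih =>
      have hk := hkey (K + n) (Nat.le_add_right _ _)
      rw [Finset.sum_range_succ, Finset.sum_range_succ]
      have h1 : b (K + (n + 1)) ≤ b (K + n) - β * a (n + K) + g (n + K) := by
        have heq : K + (n + 1) = (K + n) + 1 := by ring
        rw [heq]
        refine hk.trans_eq ?_
        have ha' : a (K + n) = a (n + K) := by rw [Nat.add_comm]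
        have hg' : ((K + n : ℕ) : ℝ) + 1 = ((n + K : ℕ) : ℝ) + 1 := by
          rw [Nat.add_comm]
        have hω' : ω (K + n) = ω (n + K) := by rw [Nat.add_comm]
        rw [ha', hg', hω']
      linarith
  -- partial sums of a (· + K) are bounded
  have hbound : ∀ n : ℕ, ∑ i ∈ Finset.range n, a (i + K) ≤ (b K + T) / β := by
    intro n
    have h1 := htel n
    have h2 : ∑ i ∈ Finset.range n, g (i + K) ≤ T :=
      Summable.sum_le_tsum (Finset.range n) (fun i _ => hgnn _) hgsum'
    have h3 : 0 ≤ b (K + n) := hbnn _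
    rw [le_div_iff₀ hβ]
    nlinarith
  have hsummK : Summable fun i => a (i + K) :=
    summable_of_sum_range_le (fun i => ha _) hbound
  exact (summable_nat_add_iff K).mp hsummK
end

section
/- Let f : H → ℝ be convex, (ε_k)_{k≥1} a positive nonincreasing sequence converging to 0, and for each k let x̄_k be the unique minimizer over H of x ↦ f(x) + (ε_k/2)‖x‖². Then for all k ≥ 1: ((ε_k − ε_{k+1})/ε_{k+1}) ⟨x̄_k, x̄_{k+1} − x̄_k⟩ ≥ ‖x̄_{k+1} − x̄_k‖² and ((ε_k − ε_{k+1})/ε_k) ⟨x̄_{k+1}, x̄_{k+1} − x̄_k⟩ ≥ ‖x̄_{k+1} − x̄_k‖². Consequently, the sequence (‖x̄_k‖)_{k≥1} is nondecreasing and ⟨x̄_{k+1}, x̄_k⟩ ≥ 0 for all k ≥ 1. -/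
open Filter Topology Set
open scoped RealInnerProductSpace

/-! Adding `ε/2 ‖·‖²` to a convex function makes it `ε`-strongly convex, so its minimizer
`x` satisfies the quadratic growth bound `F_ε(x) + ε/2 ‖y - x‖² ≤ F_ε(y)`. Writing this bound for
`x̄_k` against `x̄_{k+1}` and vice versa and adding, the values of `f` cancel and one is left with
`(ε_k + ε_{k+1}) ‖x̄_{k+1} - x̄_k‖² ≤ (ε_k - ε_{k+1}) (‖x̄_{k+1}‖² - ‖x̄_k‖²)`, from which
everything else is algebra in the inner product space. -/

section UniformConvex

variable {E : Type*} [NormedAddCommGroup E] [NormedSpace ℝ E]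
  {s : Set E} {φ : ℝ → ℝ} {g : E → ℝ} {x y : E}

lemma UniformConvexOn.add_le_of_isMinOn (hg : UniformConvexOn s φ g) (hmin : IsMinOn g s x)
    (hx : x ∈ s) (hy : y ∈ s) : g x + φ ‖x - y‖ ≤ g y := by
  have key : ∀ t ∈ Ioo (0 : ℝ) 1, t * φ ‖x - y‖ ≤ g y - g x := by
    rintro t ⟨ht0, ht1⟩
    have hconv := hg.2 hx hy ht0.le (sub_nonneg.2 ht1.le) (add_sub_cancel t 1)
    have hle : g x ≤ g _ := hmin (hg.1 hx hy ht0.le (sub_nonneg.2 ht1.le) (add_sub_cancel t 1))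
    simp only [smul_eq_mul] at hconv
    refine le_of_mul_le_mul_left ?_ (sub_pos.2 ht1)
    linarith
  -- let the weight `t` on the minimizer tend to `1`
  have hlim : Tendsto (fun t : ℝ ↦ t * φ ‖x - y‖) (𝓝[<] 1) (𝓝 (φ ‖x - y‖)) :=
    ((continuous_mul_const _).tendsto' 1 _ (one_mul _)).mono_left nhdsWithin_le_nhds
  linarith [le_of_tendsto hlim (eventually_of_mem (Ioo_mem_nhdsLT zero_lt_one) key)]

end UniformConvex

section InnerProduct

variable {E : Type*} [NormedAddCommGroup E] [InnerProductSpace ℝ E] {x y : E}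

lemma norm_sq_sub_norm_sq_eq_two_inner_sub_add (x y : E) :
    ‖y‖ ^ 2 - ‖x‖ ^ 2 = 2 * ⟪x, y - x⟫ + ‖y - x‖ ^ 2 := by
  rw [norm_sub_sq_real, inner_sub_right, real_inner_self_eq_norm_sq, real_inner_comm]
  ring

lemma norm_le_norm_of_inner_sub_nonneg (h : 0 ≤ ⟪x, y - x⟫) : ‖x‖ ≤ ‖y‖ := by
  have hid := norm_sq_sub_norm_sq_eq_two_inner_sub_add x y
  exact (pow_le_pow_iff_left₀ (norm_nonneg x) (norm_nonneg y) two_ne_zero).1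
    (by linarith [sq_nonneg ‖y - x‖])

lemma real_inner_nonneg_of_inner_sub_nonneg (h : 0 ≤ ⟪x, y - x⟫) : 0 ≤ ⟪y, x⟫ := by
  rw [inner_sub_right, real_inner_self_eq_norm_sq, real_inner_comm] at h
  linarith [sq_nonneg ‖x‖]

end InnerProduct

section Tikhonov

variable {E : Type*} [NormedAddCommGroup E] [InnerProductSpace ℝ E]
  {s : Set E} {f : E → ℝ} {ε ε' : ℝ} {x y : E}

lemma ConvexOn.add_norm_sq_le_of_isMinOn (hf : ConvexOn ℝ s f)
    (hmin : IsMinOn (fun z ↦ f z + ε / 2 * ‖z‖ ^ 2) s x) (hx : x ∈ s) (hy : y ∈ s) :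
    f x + ε / 2 * ‖x‖ ^ 2 + ε / 2 * ‖x - y‖ ^ 2 ≤ f y + ε / 2 * ‖y‖ ^ 2 := by
  have hstrong : StrongConvexOn s ε (fun z ↦ f z + ε / 2 * ‖z‖ ^ 2) :=
    strongConvexOn_iff_convex.2 (by simpa using hf)
  exact hstrong.add_le_of_isMinOn hmin hx hy

lemma add_mul_norm_sub_sq_le_of_isMinOn (hf : ConvexOn ℝ s f)
    (hx : IsMinOn (fun z ↦ f z + ε / 2 * ‖z‖ ^ 2) s x)
    (hy : IsMinOn (fun z ↦ f z + ε' / 2 * ‖z‖ ^ 2) s y) (hxs : x ∈ s) (hys : y ∈ s) :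
    (ε + ε') * ‖y - x‖ ^ 2 ≤ (ε - ε') * (‖y‖ ^ 2 - ‖x‖ ^ 2) := by
  have hxy := hf.add_norm_sq_le_of_isMinOn hx hxs hys
  have hyx := hf.add_norm_sq_le_of_isMinOn hy hys hxs
  rw [norm_sub_rev] at hxy
  linarith

lemma mul_norm_sub_sq_le_inner_left_of_isMinOn (hf : ConvexOn ℝ s f)
    (hx : IsMinOn (fun z ↦ f z + ε / 2 * ‖z‖ ^ 2) s x)
    (hy : IsMinOn (fun z ↦ f z + ε' / 2 * ‖z‖ ^ 2) s y) (hxs : x ∈ s) (hys : y ∈ s) :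
    ε' * ‖y - x‖ ^ 2 ≤ (ε - ε') * ⟪x, y - x⟫ := by
  have h := add_mul_norm_sub_sq_le_of_isMinOn hf hx hy hxs hys
  rw [norm_sq_sub_norm_sq_eq_two_inner_sub_add] at h
  linarith

lemma mul_norm_sub_sq_le_inner_right_of_isMinOn (hf : ConvexOn ℝ s f)
    (hx : IsMinOn (fun z ↦ f z + ε / 2 * ‖z‖ ^ 2) s x)
    (hy : IsMinOn (fun z ↦ f z + ε' / 2 * ‖z‖ ^ 2) s y) (hxs : x ∈ s) (hys : y ∈ s) :
    ε * ‖y - x‖ ^ 2 ≤ (ε - ε') * ⟪y, y - x⟫ := by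
  have h := add_mul_norm_sub_sq_le_of_isMinOn hf hx hy hxs hys
  have hid : ‖y‖ ^ 2 - ‖x‖ ^ 2 = 2 * ⟪y, y - x⟫ - ‖y - x‖ ^ 2 := by
    rw [norm_sub_sq_real, inner_sub_right, real_inner_self_eq_norm_sq]
    ring
  rw [hid] at h
  linarith

lemma inner_sub_nonneg_of_isMinOn (hf : ConvexOn ℝ s f)
    (hx : IsMinOn (fun z ↦ f z + ε / 2 * ‖z‖ ^ 2) s x)
    (hy : IsMinOn (fun z ↦ f z + ε' / 2 * ‖z‖ ^ 2) s y) (hxs : x ∈ s) (hys : y ∈ s)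
    (hε' : 0 < ε') (hεε' : ε' ≤ ε) : 0 ≤ ⟪x, y - x⟫ := by
  have h := mul_norm_sub_sq_le_inner_left_of_isMinOn hf hx hy hxs hys
  rcases hεε'.eq_or_lt with rfl | hlt
  · have hyx : y - x = 0 := by
      rw [sub_self, zero_mul] at h
      have hsq : ‖y - x‖ ^ 2 ≤ 0 := nonpos_of_mul_nonpos_right h hε'
      exact norm_eq_zero.1 ((pow_eq_zero_iff two_ne_zero).1 (hsq.antisymm (sq_nonneg _)))
    rw [hyx, inner_zero_right]
  · exact nonneg_of_mul_nonneg_right (le_trans (by positivity) h) (sub_pos.2 hlt)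

end Tikhonov

theorem stmt17_general
{E : Type*} [NormedAddCommGroup E] [InnerProductSpace ℝ E]
    (f : E → ℝ) (hconv : ConvexOn ℝ Set.univ f)
    (ε : ℕ → ℝ) (hεpos : ∀ k, 1 ≤ k → 0 < ε k) (hεmono : ∀ k, 1 ≤ k → ε (k + 1) ≤ ε k)
    (xb : ℕ → E)
    (hxb : ∀ k, 1 ≤ k → ∀ y : E,
      f (xb k) + ε k / 2 * ‖xb k‖ ^ 2 ≤ f y + ε k / 2 * ‖y‖ ^ 2) :
    (∀ k : ℕ, 1 ≤ k →
      (ε k - ε (k + 1)) / ε (k + 1) * ⟪xb k, xb (k + 1) - xb k⟫ ≥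
        ‖xb (k + 1) - xb k‖ ^ 2) ∧
    (∀ k : ℕ, 1 ≤ k →
      (ε k - ε (k + 1)) / ε k * ⟪xb (k + 1), xb (k + 1) - xb k⟫ ≥
        ‖xb (k + 1) - xb k‖ ^ 2) ∧
    (∀ k : ℕ, 1 ≤ k → ‖xb k‖ ≤ ‖xb (k + 1)‖) ∧
    (∀ k : ℕ, 1 ≤ k → 0 ≤ ⟪xb (k + 1), xb k⟫) := by
  have hmin : ∀ k, 1 ≤ k → IsMinOn (fun z ↦ f z + ε k / 2 * ‖z‖ ^ 2) univ (xb k) :=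
    fun k hk ↦ isMinOn_univ_iff.2 (hxb k hk)
  have hinner : ∀ k, 1 ≤ k → 0 ≤ ⟪xb k, xb (k + 1) - xb k⟫ := fun k hk ↦
    inner_sub_nonneg_of_isMinOn hconv (hmin k hk) (hmin (k + 1) (by omega)) trivial trivial
      (hεpos (k + 1) (by omega)) (hεmono k hk)
  refine ⟨fun k hk ↦ ?_, fun k hk ↦ ?_, fun k hk ↦ norm_le_norm_of_inner_sub_nonneg (hinner k hk),
    fun k hk ↦ real_inner_nonneg_of_inner_sub_nonneg (hinner k hk)⟩
  · rw [ge_iff_le, div_mul_eq_mul_div, le_div_iff₀' (hεpos (k + 1) (by omega))]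
    exact mul_norm_sub_sq_le_inner_left_of_isMinOn hconv (hmin k hk) (hmin (k + 1) (by omega))
      trivial trivial
  · rw [ge_iff_le, div_mul_eq_mul_div, le_div_iff₀' (hεpos k hk)]
    exact mul_norm_sub_sq_le_inner_right_of_isMinOn hconv (hmin k hk) (hmin (k + 1) (by omega))
      trivial trivial

/-- Lemma A.1 (first part): basic inequalities for the Tikhonov approximation
curve, monotonicity of the norms and nonnegativity of consecutive inner products. -/
theorem stmt17
{E : Type*} [NormedAddCommGroup E] [InnerProductSpace ℝ E]
    (f : E → ℝ) (hconv : ConvexOn ℝ Set.univ f) (hlsc : LowerSemicontinuous f)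
    (ε : ℕ → ℝ) (hεpos : ∀ k, 1 ≤ k → 0 < ε k) (hεmono : ∀ k, 1 ≤ k → ε (k + 1) ≤ ε k)
    (hεlim : Tendsto ε atTop (𝓝 0))
    (xb : ℕ → E)
    (hxb : ∀ k, 1 ≤ k → ∀ y : E,
      f (xb k) + ε k / 2 * ‖xb k‖ ^ 2 ≤ f y + ε k / 2 * ‖y‖ ^ 2) :
    (∀ k : ℕ, 1 ≤ k →
      (ε k - ε (k + 1)) / ε (k + 1) * ⟪xb k, xb (k + 1) - xb k⟫ ≥
        ‖xb (k + 1) - xb k‖ ^ 2) ∧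
    (∀ k : ℕ, 1 ≤ k →
      (ε k - ε (k + 1)) / ε k * ⟪xb (k + 1), xb (k + 1) - xb k⟫ ≥
        ‖xb (k + 1) - xb k‖ ^ 2) ∧
    (∀ k : ℕ, 1 ≤ k → ‖xb k‖ ≤ ‖xb (k + 1)‖) ∧
    (∀ k : ℕ, 1 ≤ k → 0 ≤ ⟪xb (k + 1), xb k⟫) :=
  stmt17_general f hconv ε hεpos hεmono xb hxb
end

section
/- Let f : H → ℝ be convex, (ε_k)_{k≥1} a positive nonincreasing sequence converging to 0, and for each k let x̄_k be the unique minimizer over H of x ↦ f(x) + (ε_k/2)‖x‖². Then for all k ≥ 1: (a) if ε_{k+1} < ε_k, then ‖x̄_{k+1}‖² − ‖x̄_k‖² ≥ ((ε_k + ε_{k+1})/(ε_k − ε_{k+1})) ‖x̄_{k+1} − x̄_k‖² and ‖x̄_k‖² + (ε_{k+1}/(ε_k − ε_{k+1})) ‖x̄_{k+1} − x̄_k‖² ≤ ⟨x̄_{k+1}, x̄_k⟩ ≤ ‖x̄_{k+1}‖² − (ε_k/(ε_k − ε_{k+1})) ‖x̄_{k+1} − x̄_k‖²; (b) ‖x̄_{k+1}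 − x̄_k‖ ≤ min( ((ε_k − ε_{k+1})/ε_{k+1}) ‖x̄_k‖, ((ε_k − ε_{k+1})/ε_k) ‖x̄_{k+1}‖ ). -/
/-!
The function `f + (ε/2)‖·‖²` is `ε`-strongly convex, so its minimizer `x̄` satisfies the quadratic
growth bound `f x̄ + (ε/2)‖x̄‖² + (ε/2)‖y - x̄‖² ≤ f y + (ε/2)‖y‖²`. Adding this bound for
`(ε_k, x̄_k)` at `x̄_{k+1}` and for `(ε_{k+1}, x̄_{k+1})` at `x̄_k` makes `f` disappear and leaves
the monotonicity inequality `⟪ε_k x̄_k - ε_{k+1} x̄_{k+1}, x̄_{k+1} - x̄_k⟫ ≥ 0` (the subdifferential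
of `f` is monotone). Splitting `ε_k x̄_k - ε_{k+1} x̄_{k+1}` in two ways gives
`ε_k ‖x̄_{k+1} - x̄_k‖² ≤ (ε_k - ε_{k+1}) ⟪x̄_{k+1}, x̄_{k+1} - x̄_k⟫` and
`ε_{k+1} ‖x̄_{k+1} - x̄_k‖² ≤ (ε_k - ε_{k+1}) ⟪x̄_{k+1} - x̄_k, x̄_k⟫`; every estimate follows from
these two, by rearranging or by Cauchy–Schwarz.
-/

open Filter Topology Set
open scoped RealInnerProductSpace

theorem StrongConvexOn.add_le_of_isMinOn {E : Type*} [NormedAddCommGroup E] [NormedSpace ℝ E]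
    {g : E → ℝ} {m : ℝ} (hg : StrongConvexOn univ m g) {x : E} (hx : IsMinOn g univ x) (y : E) :
    g x + m / 2 * ‖y - x‖ ^ 2 ≤ g y := by
  have along_segment : ∀ t ∈ Ioo (0 : ℝ) 1, g x + (1 - t) * (m / 2 * ‖y - x‖ ^ 2) ≤ g y := by
    rintro t ⟨ht0, ht1⟩
    have hmin := isMinOn_univ_iff.mp hx ((1 - t) • x + t • y)
    have hconv := hg.2 (mem_univ x) (mem_univ y) (sub_nonneg.mpr ht1.le) ht0.le (by ring)
    rw [norm_sub_rev] at hconv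
    simp only [smul_eq_mul] at hconv
    refine le_of_mul_le_mul_left ?_ ht0
    linear_combination hmin + hconv
  have hlim : Tendsto (fun t : ℝ ↦ g x + (1 - t) * (m / 2 * ‖y - x‖ ^ 2)) (𝓝[>] 0)
      (𝓝 (g x + m / 2 * ‖y - x‖ ^ 2)) := by
    have : Continuous fun t : ℝ ↦ g x + (1 - t) * (m / 2 * ‖y - x‖ ^ 2) := by fun_prop
    simpa using (this.tendsto 0).mono_left nhdsWithin_le_nhds
  exact le_of_tendsto hlim (mem_of_superset (Ioo_mem_nhdsGT one_pos) along_segment)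

section InnerProductSpace

variable {E : Type*} [NormedAddCommGroup E] [InnerProductSpace ℝ E] {a b : ℝ} {x y : E}

theorem ConvexOn.strongConvexOn_add_norm_sq {s : Set E} {f : E → ℝ}
    (hf : ConvexOn ℝ s f) (m : ℝ) : StrongConvexOn s m fun x ↦ f x + m / 2 * ‖x‖ ^ 2 :=
  strongConvexOn_iff_convex.mpr (by simpa using hf)

theorem ConvexOn.inner_smul_sub_smul_nonneg_of_isMinOn {f : E → ℝ} (hf : ConvexOn ℝ univ f)
    (hx : IsMinOn (fun z ↦ f z + a / 2 * ‖z‖ ^ 2) univ x)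
    (hy : IsMinOn (fun z ↦ f z + b / 2 * ‖z‖ ^ 2) univ y) :
    0 ≤ ⟪a • x - b • y, y - x⟫ := by
  have hxy := (hf.strongConvexOn_add_norm_sq a).add_le_of_isMinOn hx y
  have hyx := (hf.strongConvexOn_add_norm_sq b).add_le_of_isMinOn hy x
  rw [norm_sub_rev, norm_sub_sq_real] at hyx
  rw [norm_sub_sq_real] at hxy
  simp only [inner_sub_left, inner_sub_right, real_inner_smul_left, real_inner_self_eq_norm_sq,
    real_inner_comm y x]
  linarith

theorem mul_norm_sub_sq_le_mul_inner_left (h : 0 ≤ ⟪a • x - b • y, y - x⟫) :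
    a * ‖y - x‖ ^ 2 ≤ (a - b) * ⟪y, y - x⟫ := by
  have : a • x - b • y = (a - b) • y - a • (y - x) := by module
  rw [this, inner_sub_left, real_inner_smul_left, real_inner_smul_left,
    real_inner_self_eq_norm_sq] at h
  linarith

theorem mul_norm_sub_sq_le_mul_inner_right (h : 0 ≤ ⟪a • x - b • y, y - x⟫) :
    b * ‖y - x‖ ^ 2 ≤ (a - b) * ⟪y - x, x⟫ := by
  have : a • x - b • y = (a - b) • x - b • (y - x) := by module
  rw [this, inner_sub_left, real_inner_smul_left, real_inner_smul_left,
    real_inner_self_eq_norm_sq, real_inner_comm] at h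
  linarith

theorem norm_le_div_mul_norm_of_mul_norm_sq_le_inner {c : ℝ} {u v : E} (hb : 0 < b) (hc : 0 ≤ c)
    (h : b * ‖u‖ ^ 2 ≤ c * ⟪u, v⟫) : ‖u‖ ≤ c / b * ‖v‖ := by
  rcases (norm_nonneg u).eq_or_lt with hu | hu
  · rw [← hu]; positivity
  have : b * ‖u‖ * ‖u‖ ≤ c * ‖v‖ * ‖u‖ := by
    nlinarith [mul_le_mul_of_nonneg_left (real_inner_le_norm u v) hc]
  rw [div_mul_eq_mul_div, le_div_iff₀ hb, mul_comm]
  exact le_of_mul_le_mul_right this hu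

theorem inner_bounds_of_inner_smul_sub_smul_nonneg (hab : b < a)
    (h : 0 ≤ ⟪a • x - b • y, y - x⟫) :
    (‖y‖ ^ 2 - ‖x‖ ^ 2 ≥ (a + b) / (a - b) * ‖y - x‖ ^ 2) ∧
      (‖x‖ ^ 2 + b / (a - b) * ‖y - x‖ ^ 2 ≤ ⟪y, x⟫) ∧
      (⟪y, x⟫ ≤ ‖y‖ ^ 2 - a / (a - b) * ‖y - x‖ ^ 2) := by
  have hleft := mul_norm_sub_sq_le_mul_inner_left h
  have hright := mul_norm_sub_sq_le_mul_inner_right h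
  rw [inner_sub_right, real_inner_self_eq_norm_sq] at hleft
  rw [inner_sub_left, real_inner_self_eq_norm_sq] at hright
  have hab' : 0 < a - b := sub_pos.mpr hab
  refine ⟨?_, ?_, ?_⟩
  · rw [ge_iff_le, div_mul_eq_mul_div, div_le_iff₀ hab']
    linarith
  · rw [div_mul_eq_mul_div, ← le_sub_iff_add_le', div_le_iff₀ hab']
    linarith
  · rw [div_mul_eq_mul_div, le_sub_comm, div_le_iff₀ hab']
    linarith

theorem norm_sub_le_min_of_inner_smul_sub_smul_nonneg (hb : 0 < b) (hab : b ≤ a)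
    (h : 0 ≤ ⟪a • x - b • y, y - x⟫) :
    ‖y - x‖ ≤ min ((a - b) / b * ‖x‖) ((a - b) / a * ‖y‖) := by
  have hab' : 0 ≤ a - b := sub_nonneg.mpr hab
  refine le_min ?_ ?_
  · exact norm_le_div_mul_norm_of_mul_norm_sq_le_inner hb hab'
      (mul_norm_sub_sq_le_mul_inner_right h)
  · refine norm_le_div_mul_norm_of_mul_norm_sq_le_inner (hb.trans_le hab) hab' ?_
    rw [real_inner_comm]
    exact mul_norm_sub_sq_le_mul_inner_left h

end InnerProductSpace

theorem stmt18_general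
{E : Type*} [NormedAddCommGroup E] [InnerProductSpace ℝ E]
    (f : E → ℝ) (hconv : ConvexOn ℝ Set.univ f)
    (ε : ℕ → ℝ) (hεpos : ∀ k, 1 ≤ k → 0 < ε k) (hεmono : ∀ k, 1 ≤ k → ε (k + 1) ≤ ε k)
    (xb : ℕ → E)
    (hxb : ∀ k, 1 ≤ k → ∀ y : E,
      f (xb k) + ε k / 2 * ‖xb k‖ ^ 2 ≤ f y + ε k / 2 * ‖y‖ ^ 2) :
    (∀ k : ℕ, 1 ≤ k → ε (k + 1) < ε k →
      (‖xb (k + 1)‖ ^ 2 - ‖xb k‖ ^ 2 ≥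
        (ε k + ε (k + 1)) / (ε k - ε (k + 1)) * ‖xb (k + 1) - xb k‖ ^ 2) ∧
      (‖xb k‖ ^ 2 + ε (k + 1) / (ε k - ε (k + 1)) * ‖xb (k + 1) - xb k‖ ^ 2 ≤
        ⟪xb (k + 1), xb k⟫) ∧
      (⟪xb (k + 1), xb k⟫ ≤
        ‖xb (k + 1)‖ ^ 2 - ε k / (ε k - ε (k + 1)) * ‖xb (k + 1) - xb k‖ ^ 2)) ∧
    (∀ k : ℕ, 1 ≤ k →
      ‖xb (k + 1) - xb k‖ ≤
        min ((ε k - ε (k + 1)) / ε (k + 1) * ‖xb k‖)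
          ((ε k - ε (k + 1)) / ε k * ‖xb (k + 1)‖)) := by
  have hmono (k : ℕ) (hk : 1 ≤ k) :
      0 ≤ ⟪ε k • xb k - ε (k + 1) • xb (k + 1), xb (k + 1) - xb k⟫ :=
    hconv.inner_smul_sub_smul_nonneg_of_isMinOn (isMinOn_univ_iff.mpr (hxb k hk))
      (isMinOn_univ_iff.mpr (hxb (k + 1) (by omega)))
  exact ⟨fun k hk hlt ↦ inner_bounds_of_inner_smul_sub_smul_nonneg hlt (hmono k hk),
    fun k hk ↦ norm_sub_le_min_of_inner_smul_sub_smul_nonneg (hεpos (k + 1) (by omega))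
      (hεmono k hk) (hmono k hk)⟩

/-- Lemma A.1 (second part): quantitative estimates a), b), c) for the Tikhonov
approximation curve. -/
theorem stmt18
{E : Type*} [NormedAddCommGroup E] [InnerProductSpace ℝ E]
    (f : E → ℝ) (hconv : ConvexOn ℝ Set.univ f) (hlsc : LowerSemicontinuous f)
    (ε : ℕ → ℝ) (hεpos : ∀ k, 1 ≤ k → 0 < ε k) (hεmono : ∀ k, 1 ≤ k → ε (k + 1) ≤ ε k)
    (hεlim : Tendsto ε atTop (𝓝 0))
    (xb : ℕ → E)
    (hxb : ∀ k, 1 ≤ k → ∀ y : E,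
      f (xb k) + ε k / 2 * ‖xb k‖ ^ 2 ≤ f y + ε k / 2 * ‖y‖ ^ 2) :
    (∀ k : ℕ, 1 ≤ k → ε (k + 1) < ε k →
      (‖xb (k + 1)‖ ^ 2 - ‖xb k‖ ^ 2 ≥
        (ε k + ε (k + 1)) / (ε k - ε (k + 1)) * ‖xb (k + 1) - xb k‖ ^ 2) ∧
      (‖xb k‖ ^ 2 + ε (k + 1) / (ε k - ε (k + 1)) * ‖xb (k + 1) - xb k‖ ^ 2 ≤
        ⟪xb (k + 1), xb k⟫) ∧
      (⟪xb (k + 1), xb k⟫ ≤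
        ‖xb (k + 1)‖ ^ 2 - ε k / (ε k - ε (k + 1)) * ‖xb (k + 1) - xb k‖ ^ 2)) ∧
    (∀ k : ℕ, 1 ≤ k →
      ‖xb (k + 1) - xb k‖ ≤
        min ((ε k - ε (k + 1)) / ε (k + 1) * ‖xb k‖)
          ((ε k - ε (k + 1)) / ε k * ‖xb (k + 1)‖)) :=
  stmt18_general f hconv ε hεpos hεmono xb hxb
end

section
/- Let H > 0, β > 0, let K₀ be a natural number with K₀ > H^{1/β}, and define π_k = 1 / ∏_{i=K₀}^{k} (1 − H/i^β) for k ≥ K₀. Then (π_k) is a positive nondecreasing sequence with the following properties: (a) if β ∈ (0,1) there exist C₁, C₂ > 0 and an index n₀ such that e^{C₁ n^{1−β}} ≤ π_n ≤ e^{C₂ n^{1−β}} for all n ≥ n₀, and if β = 1 then π_n = O(n^H) as n → +∞; (b) if β ∈ (0,1), then for every γ ∈ ℝ there exist C₁, C₂ > 0 such that for all n large enough C₁ n^{γ+β} π_n ≤ ∑_{k=K₀}^{n} k^γ π_k ≤ C₂ n^{γ+β} π_n; (c) for every nonnegative sequence (a_k) and every n > K₀, ∑_{k=K₀+1}^{n}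 π_k (a_k − a_{k−1}) ≤ a_n π_n. -/
/-
Taking logarithms, `log π_n = ∑_{i=K₀}^n -log (1 - H / i ^ β)`, and `x ≤ -log (1 - x) ≤ x / (1 - x)`
compares this with `∑ H i ^ (-β)`, which is of order `n ^ (1 - β)` for `β < 1` and `H log n + O(1)`
for `β = 1` (the quadratic error terms `∑ H² / i²` converge).

For (b), `T n = n ^ (γ + β) π_n` has increments
`T (n+1) - T n = H (n+1) ^ γ π_{n+1} + ((n+1) ^ (γ+β) - n ^ (γ+β)) π_n`,
and since `β < 1` the second term is `o((n+1) ^ γ π_{n+1})`. As `T n → ∞`, summing the increments shows that `∑ k ^ γ π_k` and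
`T n` are comparable. Part (c) is summation by parts, using that `π` is nondecreasing.
-/

open Filter Asymptotics Topology

/-- The sequence `π_k = 1 / ∏_{i = K₀}^{k} (1 - H / i ^ β)` from Lemma A.2. -/
noncomputable def piSeq (Hc β : ℝ) (K₀ : ℕ) (k : ℕ) : ℝ :=
  (∏ i ∈ Finset.Icc K₀ k, (1 - Hc / (i : ℝ) ^ β))⁻¹

open Finset Real

theorem le_neg_log_one_sub {x : ℝ} (hx : x < 1) : x ≤ -log (1 - x) := by
  linarith [log_le_sub_one_of_pos (sub_pos.2 hx)]

theorem neg_log_one_sub_le {x : ℝ} (hx : x < 1) : -log (1 - x) ≤ x / (1 - x) := by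
  have h := one_sub_inv_le_log_of_pos (sub_pos.2 hx)
  have : x / (1 - x) = (1 - x)⁻¹ - 1 := by field_simp [(sub_pos.2 hx).ne']; ring
  linarith

theorem neg_log_one_sub_le_add_sq_div {x δ : ℝ} (hxδ : x ≤ δ) (hδ : δ < 1) :
    -log (1 - x) ≤ x + x ^ 2 / (1 - δ) := by
  have hx₁ : 0 < 1 - x := by linarith
  calc -log (1 - x) ≤ x / (1 - x) := neg_log_one_sub_le (by linarith)
    _ = x + x ^ 2 / (1 - x) := by field_simp; ring
    _ ≤ x + x ^ 2 / (1 - δ) := by gcongr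

theorem one_sub_mul_sum_Icc_inv_rpow_le {β : ℝ} (hβ₀ : 0 ≤ β) (hβ₁ : β ≤ 1) (n : ℕ) :
    (1 - β) * ∑ i ∈ Icc 1 n, ((i : ℝ) ^ β)⁻¹ ≤ (n : ℝ) ^ (1 - β) := by
  induction n with
  | zero => simp [Real.zero_rpow_nonneg]
  | succ n ih =>
    rw [sum_Icc_succ_top (by omega), mul_add]
    push_cast
    set m : ℝ := n + 1 with hm_def
    have hm : 0 < m := by positivity
    -- Bernoulli's inequality `(1 - 1 / m) ^ (1 - β) ≤ 1 - (1 - β) / m`, multiplied by `m ^ (1 - β)`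
    have hB := rpow_one_add_le_one_add_mul_self (s := -1 / m)
      (by rw [neg_div, neg_le_neg_iff, div_le_one hm]; linarith) (p := 1 - β)
      (by linarith) (by linarith)
    have e1 : 1 + -1 / m = n / m := by field_simp; ring
    have e2 : m ^ (1 - β) = m * (m ^ β)⁻¹ := by rw [rpow_sub hm, rpow_one, div_eq_mul_inv]
    rw [e1, div_rpow (by positivity) hm.le, div_le_iff₀ (by positivity), e2] at hB
    have e3 : (1 + (1 - β) * (-1 / m)) * (m * (m ^ β)⁻¹) = m * (m ^ β)⁻¹ - (1 - β) * (m ^ β)⁻¹ := by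
      field_simp; ring
    linarith

theorem isBigO_rpow_succ_sub_rpow (q : ℝ) :
    (fun n : ℕ => ((n : ℝ) + 1) ^ q - (n : ℝ) ^ q) =O[atTop] fun n => ((n : ℝ) + 1) ^ (q - 1) := by
  have hd : HasDerivAt (fun x : ℝ => x ^ q) (q * 1 ^ (q - 1)) 1 :=
    hasDerivAt_rpow_const (Or.inl one_ne_zero)
  have h := ((hd.isBigO_sub.comp_tendsto (tendsto_natCast_div_add_atTop (1 : ℝ))).mul
    (isBigO_refl (fun n : ℕ => ((n : ℝ) + 1) ^ q) atTop)).neg_left.neg_right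
  refine h.congr (fun n => ?_) (fun n => ?_)
  · have hm : (0 : ℝ) < n + 1 := by positivity
    simp only [Function.comp_apply]
    rw [div_rpow (Nat.cast_nonneg n) hm.le, one_rpow]
    field_simp
    ring
  · have hm : (0 : ℝ) < n + 1 := by positivity
    simp only [Function.comp_apply]
    rw [rpow_sub_one hm.ne']
    field_simp
    ring

theorem isLittleO_rpow_succ_sub_rpow {β : ℝ} (hβ : β < 1) (γ : ℝ) :
    (fun n : ℕ => ((n : ℝ) + 1) ^ (γ + β) - (n : ℝ) ^ (γ + β)) =o[atTop]
      fun n => ((n : ℝ) + 1) ^ γ := by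
  have hm : Tendsto (fun n : ℕ => (n : ℝ) + 1) atTop atTop :=
    tendsto_atTop_add_const_right _ 1 tendsto_natCast_atTop_atTop
  have h0 : (fun n : ℕ => ((n : ℝ) + 1) ^ (β - 1)) =o[atTop] fun _ => (1 : ℝ) :=
    (isLittleO_one_iff ℝ).2 <| by
      simpa [neg_sub, Function.comp_def] using (tendsto_rpow_neg_atTop (sub_pos.2 hβ)).comp hm
  refine (isBigO_rpow_succ_sub_rpow (γ + β)).trans_isLittleO ?_
  refine ((h0.mul_isBigO (isBigO_refl (fun n : ℕ => ((n : ℝ) + 1) ^ γ) atTop)).congr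
    (fun n => ?_) (fun n => one_mul _))
  rw [← rpow_add (by positivity)]
  ring_nf

theorem sum_Icc_mul_sub_le_of_monotone {p a : ℕ → ℝ} {K : ℕ} (hp : Monotone p) (hpK : 0 ≤ p K)
    (ha : ∀ k, 0 ≤ a k) {n : ℕ} (hn : K ≤ n) :
    ∑ k ∈ Icc (K + 1) n, p k * (a k - a (k - 1)) ≤ a n * p n := by
  induction n, hn using Nat.le_induction with
  | base => simpa using mul_nonneg (ha K) hpK
  | succ n hn ih =>
    rw [sum_Icc_succ_top (by omega), Nat.add_sub_cancel]
    nlinarith [mul_le_mul_of_nonneg_left (hp n.le_succ) (ha n)]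

theorem mul_sum_Ioc_le_sub {s T : ℕ → ℝ} {a : ℝ} {N : ℕ}
    (h : ∀ n, N ≤ n → a * s (n + 1) ≤ T (n + 1) - T n) {n : ℕ} (hn : N ≤ n) :
    a * ∑ k ∈ Ioc N n, s k ≤ T n - T N := by
  induction n, hn using Nat.le_induction with
  | base => simp
  | succ n hn ih =>
    rw [sum_Ioc_succ_top hn, mul_add]
    linarith [h n hn]

theorem exists_sum_Icc_bounds_of_increment_bounds {s T : ℕ → ℝ} {a b : ℝ} (K : ℕ) (hs : ∀ k, 0 ≤ s k)
    (ha : 0 < a) (hb : 0 < b) (hT : Tendsto T atTop atTop)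
    (hΔ : ∀ᶠ n in atTop, a * s (n + 1) ≤ T (n + 1) - T n ∧ T (n + 1) - T n ≤ b * s (n + 1)) :
    ∃ C₁, 0 < C₁ ∧ ∃ C₂, 0 < C₂ ∧ ∀ᶠ n in atTop,
      C₁ * T n ≤ ∑ k ∈ Icc K n, s k ∧ ∑ k ∈ Icc K n, s k ≤ C₂ * T n := by
  obtain ⟨N₀, hN₀⟩ := eventually_atTop.1 hΔ
  set N := max N₀ K
  have hΔN : ∀ n, N ≤ n → a * s (n + 1) ≤ T (n + 1) - T n ∧ T (n + 1) - T n ≤ b * s (n + 1) :=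
    fun n hn => hN₀ n (le_of_max_le_left hn)
  set A := ∑ k ∈ Icc K N, s k
  refine ⟨1 / (2 * b), by positivity, 2 / a, by positivity, ?_⟩
  filter_upwards [eventually_ge_atTop N, hT.eventually_ge_atTop (2 * T N),
    hT.eventually_ge_atTop (a * A - T N)] with n hn hTn hTn'
  have hlow := mul_sum_Ioc_le_sub (fun m hm => (hΔN m hm).1) hn
  have hup := mul_sum_Ioc_le_sub (s := s) (T := fun m => -T m) (a := -b)
    (fun m hm => by linarith [(hΔN m hm).2]) hn
  have hsplit : ∑ k ∈ Icc K n, s k = A + ∑ k ∈ Ioc N n, s k := by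
    rw [← sum_union (disjoint_left.2 fun k hk hk' => by simp at hk hk'; omega)]
    congr 1; ext k; simp; omega
  have hA : 0 ≤ A := sum_nonneg fun k _ => hs k
  have hS : ∑ k ∈ Ioc N n, s k ≤ ∑ k ∈ Icc K n, s k := by rw [hsplit]; linarith
  constructor
  · rw [div_mul_eq_mul_div, one_mul, div_le_iff₀ (by positivity)]
    nlinarith
  · rw [div_mul_eq_mul_div, le_div_iff₀ ha, hsplit]
    nlinarith

theorem prod_Icc_one_sub_pos {x : ℕ → ℝ} {K₀ : ℕ} (hx : ∀ i, K₀ ≤ i → x i < 1) (n : ℕ) :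
    0 < ∏ i ∈ Icc K₀ n, (1 - x i) :=
  prod_pos fun i hi => sub_pos.2 (hx i (mem_Icc.1 hi).1)

theorem monotone_inv_prod_Icc_one_sub {x : ℕ → ℝ} {K₀ : ℕ} (hx₀ : ∀ i, K₀ ≤ i → 0 ≤ x i)
    (hx₁ : ∀ i, K₀ ≤ i → x i < 1) : Monotone fun n => (∏ i ∈ Icc K₀ n, (1 - x i))⁻¹ := by
  refine monotone_nat_of_le_succ fun n => ?_
  by_cases hn : K₀ ≤ n + 1
  · have hP := prod_Icc_one_sub_pos hx₁ n
    have hxn := hx₀ (n + 1) hn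
    have hxn' := hx₁ (n + 1) hn
    rw [prod_Icc_succ_top hn]
    exact inv_anti₀ (by positivity) (mul_le_of_le_one_right hP.le (by linarith))
  · rw [Icc_eq_empty (by omega), Icc_eq_empty (by omega)]

section PiSeq

variable {Hc β : ℝ} {K₀ : ℕ}

theorem lt_natCast_rpow (hH : 0 < Hc) (hβ : 0 < β) (hK₀ : Hc ^ (1 / β) < K₀) {i : ℕ}
    (hi : K₀ ≤ i) : Hc < (i : ℝ) ^ β := by
  rw [one_div, rpow_inv_lt_iff_of_pos hH.le (Nat.cast_nonneg _) hβ] at hK₀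
  exact hK₀.trans_le (rpow_le_rpow (Nat.cast_nonneg _) (Nat.cast_le.2 hi) hβ.le)

theorem div_natCast_rpow_lt_one (hH : 0 < Hc) (hβ : 0 < β) (hK₀ : Hc ^ (1 / β) < K₀) {i : ℕ}
    (hi : K₀ ≤ i) : Hc / (i : ℝ) ^ β < 1 :=
  have h := lt_natCast_rpow hH hβ hK₀ hi
  (div_lt_one (hH.trans h)).2 h

theorem piSeq_pos (hH : 0 < Hc) (hβ : 0 < β) (hK₀ : Hc ^ (1 / β) < K₀) (n : ℕ) :
    0 < piSeq Hc β K₀ n :=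
  inv_pos.2 (prod_Icc_one_sub_pos (fun _ => div_natCast_rpow_lt_one hH hβ hK₀) n)

theorem monotone_piSeq (hH : 0 < Hc) (hβ : 0 < β) (hK₀ : Hc ^ (1 / β) < K₀) :
    Monotone (piSeq Hc β K₀) :=
  monotone_inv_prod_Icc_one_sub (fun _ _ => by positivity)
    (fun _ => div_natCast_rpow_lt_one hH hβ hK₀)

theorem log_piSeq (hH : 0 < Hc) (hβ : 0 < β) (hK₀ : Hc ^ (1 / β) < K₀) (n : ℕ) :
    log (piSeq Hc β K₀ n) = ∑ i ∈ Icc K₀ n, -log (1 - Hc / (i : ℝ) ^ β) := by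
  rw [piSeq, log_inv, log_prod fun i hi =>
    (sub_pos.2 (div_natCast_rpow_lt_one hH hβ hK₀ (mem_Icc.1 hi).1)).ne', sum_neg_distrib]

theorem piSeq_succ_mul (hH : 0 < Hc) (hβ : 0 < β) (hK₀ : Hc ^ (1 / β) < K₀) {n : ℕ}
    (hn : K₀ ≤ n + 1) :
    piSeq Hc β K₀ (n + 1) * (1 - Hc / ((n : ℝ) + 1) ^ β) = piSeq Hc β K₀ n := by
  have h := (sub_pos.2 (div_natCast_rpow_lt_one hH hβ hK₀ hn)).ne'
  push_cast at h
  rw [piSeq, piSeq, prod_Icc_succ_top hn, mul_inv, Nat.cast_succ, inv_mul_cancel_right₀ h]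

theorem exp_mul_rpow_le_piSeq (hH : 0 < Hc) (hβ : 0 < β) (hK₀ : Hc ^ (1 / β) < K₀) {n : ℕ}
    (hn : 2 * K₀ ≤ n) : exp (Hc / 2 * (n : ℝ) ^ (1 - β)) ≤ piSeq Hc β K₀ n := by
  have hK₀pos : 0 < K₀ := Nat.cast_pos.1 ((rpow_pos_of_pos hH _).trans hK₀)
  have hn₀ : (0 : ℝ) < n := by exact_mod_cast (show 0 < n by omega)
  have hterm : ∀ i ∈ Icc K₀ n, Hc / (n : ℝ) ^ β ≤ -log (1 - Hc / (i : ℝ) ^ β) := fun i hi =>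
    (div_le_div_of_nonneg_left hH.le (hH.trans (lt_natCast_rpow hH hβ hK₀ (mem_Icc.1 hi).1))
      (rpow_le_rpow (Nat.cast_nonneg _) (Nat.cast_le.2 (mem_Icc.1 hi).2) hβ.le)).trans
    (le_neg_log_one_sub (div_natCast_rpow_lt_one hH hβ hK₀ (mem_Icc.1 hi).1))
  have hcard : (n : ℝ) ≤ 2 * #(Icc K₀ n) := by
    rw [Nat.card_Icc]; exact_mod_cast (show n ≤ 2 * (n + 1 - K₀) by omega)
  rw [← le_log_iff_exp_le (piSeq_pos hH hβ hK₀ n), log_piSeq hH hβ hK₀]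
  calc Hc / 2 * (n : ℝ) ^ (1 - β) = (n : ℝ) / 2 * (Hc / (n : ℝ) ^ β) := by
        rw [rpow_sub hn₀, rpow_one]; ring
    _ ≤ #(Icc K₀ n) • (Hc / (n : ℝ) ^ β) := by
        rw [nsmul_eq_mul]; gcongr; linarith
    _ ≤ _ := card_nsmul_le_sum _ _ _ hterm

theorem piSeq_le_exp_mul_rpow (hH : 0 < Hc) (hβ : 0 < β) (hK₀ : Hc ^ (1 / β) < K₀)
    (hβ₁ : β < 1) (n : ℕ) :
    piSeq Hc β K₀ n ≤ exp (Hc / ((1 - Hc / (K₀ : ℝ) ^ β) * (1 - β)) * (n : ℝ) ^ (1 - β)) := by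
  have hK₀pos : 0 < K₀ := Nat.cast_pos.1 ((rpow_pos_of_pos hH _).trans hK₀)
  set δ := Hc / (K₀ : ℝ) ^ β
  have hδ : 0 < 1 - δ := sub_pos.2 (div_natCast_rpow_lt_one hH hβ hK₀ le_rfl)
  have hterm : ∀ i ∈ Icc K₀ n, -log (1 - Hc / (i : ℝ) ^ β) ≤ Hc / (1 - δ) * ((i : ℝ) ^ β)⁻¹ := by
    intro i hi
    have hi := (mem_Icc.1 hi).1
    have hxδ : Hc / (i : ℝ) ^ β ≤ δ :=
      div_le_div_of_nonneg_left hH.le (hH.trans (lt_natCast_rpow hH hβ hK₀ le_rfl))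
        (rpow_le_rpow (Nat.cast_nonneg _) (Nat.cast_le.2 hi) hβ.le)
    calc -log (1 - Hc / (i : ℝ) ^ β) ≤ Hc / (i : ℝ) ^ β / (1 - Hc / (i : ℝ) ^ β) :=
          neg_log_one_sub_le (div_natCast_rpow_lt_one hH hβ hK₀ hi)
      _ ≤ Hc / (i : ℝ) ^ β / (1 - δ) := by gcongr
      _ = Hc / (1 - δ) * ((i : ℝ) ^ β)⁻¹ := by ring
  rw [← log_le_iff_le_exp (piSeq_pos hH hβ hK₀ n), log_piSeq hH hβ hK₀]
  calc ∑ i ∈ Icc K₀ n, -log (1 - Hc / (i : ℝ) ^ β)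
      ≤ ∑ i ∈ Icc 1 n, Hc / (1 - δ) * ((i : ℝ) ^ β)⁻¹ :=
        (sum_le_sum hterm).trans <| sum_le_sum_of_subset_of_nonneg
          (Icc_subset_Icc hK₀pos le_rfl) fun _ _ _ => by positivity
    _ = Hc / ((1 - δ) * (1 - β)) * ((1 - β) * ∑ i ∈ Icc 1 n, ((i : ℝ) ^ β)⁻¹) := by
        rw [← mul_sum]; field_simp [(sub_pos.2 hβ₁).ne']
    _ ≤ _ := by
        gcongr
        exact one_sub_mul_sum_Icc_inv_rpow_le hβ.le hβ₁.le n

theorem piSeq_one_isBigO (hH : 0 < Hc) (hK₀ : Hc < K₀) :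
    (fun n : ℕ => piSeq Hc 1 K₀ n) =O[atTop] fun n : ℕ => (n : ℝ) ^ Hc := by
  have hK₀' : Hc ^ (1 / (1 : ℝ)) < K₀ := by rwa [div_one, rpow_one]
  have hK₀pos : (0 : ℝ) < K₀ := hH.trans hK₀
  set δ := Hc / (K₀ : ℝ)
  have hδ : 0 < 1 - δ := sub_pos.2 ((div_lt_one hK₀pos).2 hK₀)
  set c := Hc ^ 2 / (1 - δ)
  refine isBigO_iff.2 ⟨exp (Hc + 2 * c), ?_⟩
  filter_upwards [eventually_gt_atTop 0] with n hn
  have hn₀ : (0 : ℝ) < n := Nat.cast_pos.2 hn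
  have hterm : ∀ i ∈ Icc K₀ n,
      -log (1 - Hc / (i : ℝ) ^ (1 : ℝ)) ≤ Hc * (i : ℝ)⁻¹ + c * ((i : ℝ) ^ 2)⁻¹ := by
    intro i hi
    rw [rpow_one]
    calc -log (1 - Hc / (i : ℝ)) ≤ Hc / i + (Hc / i) ^ 2 / (1 - δ) :=
          neg_log_one_sub_le_add_sq_div
            (div_le_div_of_nonneg_left hH.le hK₀pos (Nat.cast_le.2 (mem_Icc.1 hi).1))
            (sub_pos.1 hδ)
      _ = Hc * (i : ℝ)⁻¹ + c * ((i : ℝ) ^ 2)⁻¹ := by simp only [c]; ring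
  have hharm : ∑ i ∈ Icc 1 n, (i : ℝ)⁻¹ ≤ 1 + log n := by
    simpa only [harmonic_eq_sum_Icc, Rat.cast_sum, Rat.cast_inv, Rat.cast_natCast]
      using harmonic_le_one_add_log n
  have hsq : ∑ i ∈ Icc 1 n, ((i : ℝ) ^ 2)⁻¹ ≤ 2 := by
    have h := sum_Ioo_inv_sq_le (α := ℝ) 0 (n + 1)
    rwa [show Ioo 0 (n + 1) = Icc 1 n by ext; simp; omega, Nat.cast_zero, zero_add,
      div_one] at h
  rw [norm_of_nonneg (piSeq_pos hH one_pos hK₀' n).le, norm_of_nonneg (rpow_nonneg hn₀.le _),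
    rpow_def_of_pos hn₀, ← exp_add, ← log_le_iff_le_exp (piSeq_pos hH one_pos hK₀' n),
    log_piSeq hH one_pos hK₀']
  calc ∑ i ∈ Icc K₀ n, -log (1 - Hc / (i : ℝ) ^ (1 : ℝ))
      ≤ ∑ i ∈ Icc 1 n, (Hc * (i : ℝ)⁻¹ + c * ((i : ℝ) ^ 2)⁻¹) :=
        (sum_le_sum hterm).trans <| sum_le_sum_of_subset_of_nonneg
          (Icc_subset_Icc (Nat.cast_pos.1 hK₀pos) le_rfl) fun _ _ _ => by positivity
    _ = Hc * ∑ i ∈ Icc 1 n, (i : ℝ)⁻¹ + c * ∑ i ∈ Icc 1 n, ((i : ℝ) ^ 2)⁻¹ := by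
        rw [sum_add_distrib, mul_sum, mul_sum]
    _ ≤ Hc * (1 + log n) + c * 2 := by gcongr
    _ = Hc + 2 * c + log n * Hc := by ring

theorem rpow_mul_piSeq_succ_sub (hH : 0 < Hc) (hβ : 0 < β) (hK₀ : Hc ^ (1 / β) < K₀) (γ : ℝ)
    {n : ℕ} (hn : K₀ ≤ n + 1) :
    ((n : ℝ) + 1) ^ (γ + β) * piSeq Hc β K₀ (n + 1) - (n : ℝ) ^ (γ + β) * piSeq Hc β K₀ n =
      Hc * (((n : ℝ) + 1) ^ γ * piSeq Hc β K₀ (n + 1)) +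
        (((n : ℝ) + 1) ^ (γ + β) - (n : ℝ) ^ (γ + β)) * piSeq Hc β K₀ n := by
  have hm : (0 : ℝ) < n + 1 := by positivity
  rw [← piSeq_succ_mul hH hβ hK₀ hn, rpow_add hm]
  field_simp
  ring

theorem tendsto_rpow_mul_piSeq_atTop (hH : 0 < Hc) (hβ : 0 < β) (hK₀ : Hc ^ (1 / β) < K₀)
    (hβ₁ : β < 1) (q : ℝ) :
    Tendsto (fun n : ℕ => (n : ℝ) ^ q * piSeq Hc β K₀ n) atTop atTop := by
  have hp : 0 < 1 - β := sub_pos.2 hβ₁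
  -- `exp (Hc / 2 * y) * y ^ (q / (1 - β)) → ∞`, evaluated at `y = n ^ (1 - β)`
  have h := (tendsto_exp_mul_div_rpow_atTop (-(q / (1 - β))) (Hc / 2) (by positivity)).comp
    ((tendsto_rpow_atTop hp).comp tendsto_natCast_atTop_atTop)
  refine tendsto_atTop_mono' _ ?_ h
  filter_upwards [eventually_ge_atTop (2 * K₀)] with n hn
  rw [Function.comp_apply, Function.comp_apply, ← rpow_mul (Nat.cast_nonneg n),
    show (1 - β) * -(q / (1 - β)) = -q by field_simp, rpow_neg (Nat.cast_nonneg n),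
    div_inv_eq_mul, mul_comm]
  exact mul_le_mul_of_nonneg_left (exp_mul_rpow_le_piSeq hH hβ hK₀ hn) (by positivity)

theorem exists_sum_rpow_mul_piSeq_bounds (hH : 0 < Hc) (hβ : 0 < β) (hK₀ : Hc ^ (1 / β) < K₀)
    (hβ₁ : β < 1) (γ : ℝ) :
    ∃ C₁ : ℝ, 0 < C₁ ∧ ∃ C₂ : ℝ, 0 < C₂ ∧ ∀ᶠ n : ℕ in atTop,
      C₁ * (n : ℝ) ^ (γ + β) * piSeq Hc β K₀ n ≤
        ∑ k ∈ Icc K₀ n, (k : ℝ) ^ γ * piSeq Hc β K₀ k ∧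
      ∑ k ∈ Icc K₀ n, (k : ℝ) ^ γ * piSeq Hc β K₀ k ≤
        C₂ * (n : ℝ) ^ (γ + β) * piSeq Hc β K₀ n := by
  set P := piSeq Hc β K₀
  have hΔ : ∀ᶠ n : ℕ in atTop,
      Hc / 2 * (((n + 1 : ℕ) : ℝ) ^ γ * P (n + 1)) ≤
          ((n + 1 : ℕ) : ℝ) ^ (γ + β) * P (n + 1) - (n : ℝ) ^ (γ + β) * P n ∧
        ((n + 1 : ℕ) : ℝ) ^ (γ + β) * P (n + 1) - (n : ℝ) ^ (γ + β) * P n ≤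
          3 * Hc / 2 * (((n + 1 : ℕ) : ℝ) ^ γ * P (n + 1)) := by
    filter_upwards [(isLittleO_rpow_succ_sub_rpow hβ₁ γ).def (half_pos hH),
      eventually_ge_atTop K₀] with n hn hKn
    rw [norm_eq_abs, norm_of_nonneg (by positivity)] at hn
    have hP := monotone_piSeq hH hβ hK₀ n.le_succ
    have hP₀ := piSeq_pos hH hβ hK₀ n
    have herr : |(((n : ℝ) + 1) ^ (γ + β) - (n : ℝ) ^ (γ + β)) * P n| ≤
        Hc / 2 * (((n : ℝ) + 1) ^ γ * P (n + 1)) := by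
      rw [abs_mul, abs_of_pos hP₀, ← mul_assoc]
      exact mul_le_mul hn hP hP₀.le (by positivity)
    push_cast
    rw [rpow_mul_piSeq_succ_sub hH hβ hK₀ γ (by omega)]
    constructor <;> linarith [abs_le.1 herr]
  obtain ⟨C₁, hC₁, C₂, hC₂, h⟩ := exists_sum_Icc_bounds_of_increment_bounds K₀
    (fun k => mul_nonneg (rpow_nonneg (Nat.cast_nonneg k) γ) (piSeq_pos hH hβ hK₀ k).le)
    (by positivity) (by positivity) (tendsto_rpow_mul_piSeq_atTop hH hβ hK₀ hβ₁ (γ + β)) hΔ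
  exact ⟨C₁, hC₁, C₂, hC₂, h.mono fun n hn => by simpa only [mul_assoc] using hn⟩

end PiSeq

/-- Lemma A.2: positivity, monotonicity and growth properties of the sequence
`π_k = 1 / ∏_{i = K₀}^{k} (1 - H / i ^ β)`. -/
theorem stmt19 (Hc β : ℝ) (hH : 0 < Hc) (hβ : 0 < β)
    (K₀ : ℕ) (hK₀ : Hc ^ (1 / β) < (K₀ : ℝ)) :
    (∀ n : ℕ, K₀ ≤ n → 0 < piSeq Hc β K₀ n) ∧
    (∀ n : ℕ, K₀ ≤ n → piSeq Hc β K₀ n ≤ piSeq Hc β K₀ (n + 1)) ∧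
    (β < 1 → ∃ C₁ : ℝ, 0 < C₁ ∧ ∃ C₂ : ℝ, 0 < C₂ ∧ ∃ n₀ : ℕ, ∀ n : ℕ, n₀ ≤ n →
      Real.exp (C₁ * (n : ℝ) ^ (1 - β)) ≤ piSeq Hc β K₀ n ∧
      piSeq Hc β K₀ n ≤ Real.exp (C₂ * (n : ℝ) ^ (1 - β))) ∧
    (β = 1 → (fun n : ℕ => piSeq Hc β K₀ n) =O[atTop] fun n : ℕ => (n : ℝ) ^ Hc) ∧
    (β < 1 → ∀ γ : ℝ, ∃ C₁ : ℝ, 0 < C₁ ∧ ∃ C₂ : ℝ, 0 < C₂ ∧ ∀ᶠ n : ℕ in atTop,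
      C₁ * (n : ℝ) ^ (γ + β) * piSeq Hc β K₀ n ≤
        ∑ k ∈ Finset.Icc K₀ n, (k : ℝ) ^ γ * piSeq Hc β K₀ k ∧
      ∑ k ∈ Finset.Icc K₀ n, (k : ℝ) ^ γ * piSeq Hc β K₀ k ≤
        C₂ * (n : ℝ) ^ (γ + β) * piSeq Hc β K₀ n) ∧
    (∀ a : ℕ → ℝ, (∀ k, 0 ≤ a k) → ∀ n : ℕ, K₀ < n →
      ∑ k ∈ Finset.Icc (K₀ + 1) n, piSeq Hc β K₀ k * (a k - a (k - 1)) ≤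
        a n * piSeq Hc β K₀ n) := by
  have hmono := monotone_piSeq hH hβ hK₀
  refine ⟨fun n _ => piSeq_pos hH hβ hK₀ n, fun n _ => hmono n.le_succ, fun hβ₁ => ?_,
    fun hβ₁ => ?_, exists_sum_rpow_mul_piSeq_bounds hH hβ hK₀, fun a ha n hn =>
      sum_Icc_mul_sub_le_of_monotone hmono (piSeq_pos hH hβ hK₀ K₀).le ha hn.le⟩
  · have hδ := sub_pos.2 (div_natCast_rpow_lt_one hH hβ hK₀ le_rfl)
    exact ⟨Hc / 2, half_pos hH, _, div_pos hH (mul_pos hδ (sub_pos.2 hβ₁)), 2 * K₀,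
      fun n hn => ⟨exp_mul_rpow_le_piSeq hH hβ hK₀ hn, piSeq_le_exp_mul_rpow hH hβ hK₀ hβ₁ n⟩⟩
  · subst hβ₁
    exact piSeq_one_isBigO hH (by rwa [div_one, rpow_one] at hK₀)
end
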